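/- arXiv:2210.10384 — 6 statements merged into one kernel-verified Lean document; each statement's English description precedes it below -/
import Mathlib

section
/- If X is a hereditarily Baire topological space and E a metric space, then for every mapping f: X → E, the σ-fragmentability index equals the fragmentability index: σ-frag(f) = frag(f). -/
open Set Filter Ordinal ENNReal

universe u v

section Defs

variable {X : Type u} {E : Type v}

/-- `f` restricted to `A` is `ε`-fragmented: every nonempty subset of `A` has a relatively
open nonempty piece on which the oscillation (diameter of the image) of `f` is at most `ε`. -/
def EpsFragOn [TopologicalSpace X] [PseudoEMetricSpace E] (f : X → E) (A : Set X)
    (ε : ℝ≥0∞) : Prop :=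
  ∀ F : Set X, F ⊆ A → F.Nonempty → ∃ V : Set X, IsOpen V ∧ (V ∩ F).Nonempty ∧
    EMetric.diam (f '' (V ∩ F)) ≤ ε

/-- The fragmentability index `frag f = inf {ε > 0 : f is ε-fragmented}` (with `inf ∅ = ∞`). -/
noncomputable def fragIdx [TopologicalSpace X] [PseudoEMetricSpace E] (f : X → E) : ℝ≥0∞ :=
  sInf {ε | 0 < ε ∧ EpsFragOn f Set.univ ε}

/-- A set `H` is resolvable: every nonempty `A ⊆ X` has a relatively open nonempty piece
entirely inside `H` or entirely inside its complement. -/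
def Resolvable [TopologicalSpace X] (H : Set X) : Prop :=
  ∀ A : Set X, A.Nonempty → ∃ U : Set X, IsOpen U ∧ (U ∩ A).Nonempty ∧
    (U ∩ A ⊆ H ∨ U ∩ A ⊆ Hᶜ)

/-- The σ-fragmentability index by resolvable sets. -/
noncomputable def sfragIdx [TopologicalSpace X] [PseudoEMetricSpace E] (f : X → E) : ℝ≥0∞ :=
  sInf {ε | 0 < ε ∧ ∃ H : ℕ → Set X, (∀ n, Resolvable (H n)) ∧ (⋃ n, H n) = Set.univ ∧
    ∀ n, EpsFragOn f (H n) ε}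

/-- `g` is constant on each set of some resolvable partition of `X`, i.e. on each difference
`U (γ+1) \ U γ` of an increasing transfinite sequence of open sets from `∅` to `X`,
continuous at limit ordinals. -/
def ConstOnResolvablePartition [TopologicalSpace X] (g : X → E) : Prop :=
  ∃ (κ : Ordinal.{u}) (U : Ordinal.{u} → Set X),
    (∀ α, IsOpen (U α)) ∧ (∀ α β : Ordinal, α ≤ β → U α ⊆ U β) ∧
    U 0 = ∅ ∧ U κ = Set.univ ∧
    (∀ γ, γ ≤ κ → Order.IsSuccLimit γ → U γ = ⋃ α < γ, U α) ∧
    (∀ γ < κ, ∀ x ∈ U (γ + 1) \ U γ, ∀ y ∈ U (γ + 1) \ U γ, g x = g y)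

/-- The transfinite derivation of open sets in the definition of the oscillation rank
`β(f, ε)`:  `U 0 = ∅`, `U (α+1) = U α ∪ {x ∉ U α : ∃ open V ∋ x, diam f (V \ U α) < ε}`,
and unions at limit ordinals. -/
noncomputable def oscSet [TopologicalSpace X] [PseudoEMetricSpace E] (f : X → E)
    (ε : ℝ≥0∞) (o : Ordinal.{u}) : Set X :=
  Ordinal.limitRecOn o ∅
    (fun _ U => U ∪ {x | x ∉ U ∧ ∃ V : Set X, IsOpen V ∧ x ∈ V ∧
      EMetric.diam (f '' (V \ U)) < ε})
    (fun γ _ ih => ⋃ (β : Ordinal) (h : β < γ), ih β h)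

/-- `f` has countable oscillation rank: `β(f) < ω₁`, i.e. for every `ε > 0` the derivation
reaches `X` at some countable ordinal. -/
def CountableOscRank [TopologicalSpace X] [PseudoEMetricSpace E] (f : X → E) : Prop :=
  ∀ ε : ℝ≥0∞, 0 < ε → ∃ α < ω₁, oscSet f ε α = Set.univ

/-- A transfinite sequence `(V α)_{α ≤ κ}` of open sets has property `*(f, ε)`. -/
def StarProp [TopologicalSpace X] [PseudoEMetricSpace E] (f : X → E) (ε : ℝ≥0∞)
    (κ : Ordinal.{u}) (V : Ordinal.{u} → Set X) : Prop :=
  (∀ α, α ≤ κ → IsOpen (V α)) ∧ (∀ α β : Ordinal, α ≤ β → β ≤ κ → V α ⊆ V β) ∧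
  V 0 = ∅ ∧ V κ = Set.univ ∧
  (∀ γ, γ ≤ κ → Order.IsSuccLimit γ → V γ = ⋃ α < γ, V α) ∧
  (∀ α < κ, ∀ x ∈ V (α + 1) \ V α, ∃ W : Set X, IsOpen W ∧ x ∈ W ∧
    EMetric.diam (f '' (W \ V α)) < ε)

/-- Uniform distance `d(f, g) = sup_x ρ(f x, g x)` (in `[0, ∞]`). -/
noncomputable def unifDist [PseudoEMetricSpace E] (f g : X → E) : ℝ≥0∞ :=
  ⨆ x, edist (f x) (g x)

/-- Distance from `f` to the family of σ-fragmented mappings. -/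
noncomputable def distToSFrag [TopologicalSpace X] [PseudoEMetricSpace E] (f : X → E) : ℝ≥0∞ :=
  ⨅ (g : {g : X → E // sfragIdx g = 0}), unifDist f g.1

end Defs

/-!
A cover by resolvable sets `H n` can be localised in a hereditarily Baire space: in the Baire
space `closure F`, the points near which `closure F` lies entirely in `H n` or entirely in its
complement form a dense open set, for each `n`. A point common to all these sets lies in some
`H m`, so it has a neighbourhood `U` with `U ∩ F ⊆ H m`, and `U ∩ F ≠ ∅`. Fragmentability of
`f` on `H m` then yields a small-oscillation open piece of `U ∩ F`, hence of `F`.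
-/

namespace Resolvable

variable {X : Type*} [TopologicalSpace X]

theorem univ : Resolvable (Set.univ : Set X) :=
  fun _ hA => ⟨Set.univ, isOpen_univ, by rwa [univ_inter], Or.inl (subset_univ _)⟩

theorem exists_isOpen_dense_decided {H : Set X} (hH : Resolvable H) (C : Set X) :
    ∃ S : Set C, IsOpen S ∧ Dense S ∧
      ∀ x ∈ S, ∃ U : Set X, IsOpen U ∧ (x : X) ∈ U ∧ (U ∩ C ⊆ H ∨ U ∩ C ⊆ Hᶜ) := by
  refine ⟨{x | ∃ U : Set X, IsOpen U ∧ (x : X) ∈ U ∧ (U ∩ C ⊆ H ∨ U ∩ C ⊆ Hᶜ)}, ?_, ?_,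
    fun _ hx => hx⟩
  · refine isOpen_iff_forall_mem_open.2 fun x ⟨U, hU, hxU, hdec⟩ => ?_
    exact ⟨Subtype.val ⁻¹' U, fun y hy => ⟨U, hU, hy, hdec⟩,
      hU.preimage continuous_subtype_val, hxU⟩
  · refine dense_iff_inter_open.2 fun O hO ⟨x, hxO⟩ => ?_
    obtain ⟨W, hW, rfl⟩ := isOpen_induced_iff.1 hO
    obtain ⟨U, hU, ⟨y, hyU, hyW, hyC⟩, hdec⟩ := hH (W ∩ C) ⟨x, hxO, x.2⟩
    refine ⟨⟨y, hyC⟩, hyW, U ∩ W, hU.inter hW, ⟨hyU, hyW⟩, ?_⟩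
    rw [inter_assoc]
    exact hdec

end Resolvable

section HereditarilyBaire

variable {X : Type*} [TopologicalSpace X]

theorem exists_isOpen_inter_subset_of_resolvable_cover
    (hX : ∀ F : Set X, IsClosed F → BaireSpace F) {H : ℕ → Set X}
    (hres : ∀ n, Resolvable (H n)) (hcov : ⋃ n, H n = Set.univ) {F : Set X} (hF : F.Nonempty) :
    ∃ m, ∃ U : Set X, IsOpen U ∧ (U ∩ F).Nonempty ∧ U ∩ F ⊆ H m := by
  have : BaireSpace (closure F) := hX _ isClosed_closure
  have : Nonempty (closure F) := (hF.mono subset_closure).to_subtype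
  choose S hSopen hSdense hSdec using fun n => (hres n).exists_isOpen_dense_decided (closure F)
  obtain ⟨x, hx⟩ := (dense_iInter_of_isOpen hSopen hSdense).nonempty
  obtain ⟨m, hxm⟩ := mem_iUnion.1 (hcov ▸ mem_univ (x : X))
  obtain ⟨U, hU, hxU, hdec⟩ := hSdec m x (mem_iInter.1 hx m)
  have hUH : U ∩ closure F ⊆ H m := hdec.resolve_right fun h => h ⟨hxU, x.2⟩ hxm
  exact ⟨m, U, hU, mem_closure_iff.1 x.2 U hU hxU,
    fun z hz => hUH ⟨hz.1, subset_closure hz.2⟩⟩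

variable {E : Type*} [PseudoEMetricSpace E]

theorem epsFragOn_univ_of_resolvable_cover
    (hX : ∀ F : Set X, IsClosed F → BaireSpace F) {f : X → E} {ε : ℝ≥0∞} {H : ℕ → Set X}
    (hres : ∀ n, Resolvable (H n)) (hcov : ⋃ n, H n = Set.univ)
    (hfrag : ∀ n, EpsFragOn f (H n) ε) :
    EpsFragOn f Set.univ ε := by
  intro F _ hF
  obtain ⟨m, U, hU, hUF, hUFH⟩ := exists_isOpen_inter_subset_of_resolvable_cover hX hres hcov hF
  obtain ⟨V, hV, hVUF, hdiam⟩ := hfrag m (U ∩ F) hUFH hUF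
  refine ⟨V ∩ U, hV.inter hU, ?_, ?_⟩ <;> rwa [inter_assoc]

theorem fragIdx_le_sfragIdx (hX : ∀ F : Set X, IsClosed F → BaireSpace F) (f : X → E) :
    fragIdx f ≤ sfragIdx f :=
  sInf_le_sInf fun _ ⟨hε, _, hres, hcov, hfrag⟩ =>
    ⟨hε, epsFragOn_univ_of_resolvable_cover hX hres hcov hfrag⟩

end HereditarilyBaire

theorem sfragIdx_le_fragIdx {X E : Type*} [TopologicalSpace X] [PseudoEMetricSpace E]
    (f : X → E) : sfragIdx f ≤ fragIdx f :=
  sInf_le_sInf fun _ ⟨hε, hfrag⟩ =>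
    ⟨hε, fun _ => Set.univ, fun _ => Resolvable.univ, iUnion_const Set.univ, fun _ => hfrag⟩

/-- If `X` is hereditarily Baire and `E` metric, then `σ-frag(f) = frag(f)`. -/
theorem stmt_0 {X E : Type*} [TopologicalSpace X] [MetricSpace E]
    (hX : ∀ F : Set X, IsClosed F → BaireSpace F)
    (f : X → E) : sfragIdx f = fragIdx f :=
  (sfragIdx_le_fragIdx f).antisymm (fragIdx_le_sfragIdx hX f)
end

section
/- Let X be a topological space and (E,ρ) a metric space. If g: X → E is constant on each set of some resolvable partition of X, then g is fragmented (frag(g) = 0). -/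
open Set Filter Ordinal ENNReal

universe u v

/-! Given `F ≠ ∅`, take the least ordinal `γ` with `U γ ∩ F ≠ ∅`. It is neither `0` nor a limit
(by continuity of `U`), so `γ = δ + 1` and `U (δ + 1) ∩ F` is a nonempty relatively open piece of
`F` lying in the single partition set `U (δ + 1) \ U δ`, where `g` is constant. Hence `g` is
`0`-fragmented. -/

theorem EpsFragOn.mono {X E : Type*} [TopologicalSpace X] [PseudoEMetricSpace E] {f : X → E}
    {A : Set X} {ε ε' : ℝ≥0∞} (h : EpsFragOn f A ε) (hε : ε ≤ ε') : EpsFragOn f A ε' :=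
  fun F hFA hF => (h F hFA hF).imp fun _ ⟨hV, hVF, hdiam⟩ => ⟨hV, hVF, hdiam.trans hε⟩

theorem fragIdx_eq_zero_of_epsFragOn_zero {X E : Type*} [TopologicalSpace X]
    [PseudoEMetricSpace E] {f : X → E} (h : EpsFragOn f univ 0) : fragIdx f = 0 :=
  nonpos_iff_eq_zero.mp <| le_of_forall_gt_imp_ge_of_dense fun _ hε =>
    sInf_le ⟨hε, h.mono zero_le⟩

theorem exists_disjoint_and_succ_inter_nonempty {X : Type*} {U : Ordinal → Set X} {κ : Ordinal}
    (hU0 : U 0 = ∅) (hlim : ∀ γ, γ ≤ κ → Order.IsSuccLimit γ → U γ = ⋃ α < γ, U α)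
    {F : Set X} (hF : (U κ ∩ F).Nonempty) :
    ∃ δ < κ, Disjoint (U δ) F ∧ (U (δ + 1) ∩ F).Nonempty := by
  obtain ⟨γ, hγ, hmin⟩ := wellFounded_lt.has_min {γ | (U γ ∩ F).Nonempty} ⟨κ, hF⟩
  have hdisj : ∀ β < γ, Disjoint (U β) F := fun β hβ =>
    disjoint_iff_inter_eq_empty.mpr <| not_nonempty_iff_eq_empty.mp fun h => hmin β h hβ
  have hγκ : γ ≤ κ := not_lt.mp fun h => hmin κ hF h
  rcases Ordinal.zero_or_succ_or_isSuccLimit γ with rfl | ⟨δ, rfl⟩ | hγlim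
  · simp [hU0] at hγ
  · refine ⟨δ, (Order.lt_succ δ).trans_le hγκ, hdisj δ (Order.lt_succ δ), ?_⟩
    rwa [← Order.succ_eq_add_one]
  · exfalso
    obtain ⟨x, hxU, hxF⟩ := hγ
    rw [hlim γ hγκ hγlim] at hxU
    obtain ⟨α, hα, hxα⟩ := mem_iUnion₂.mp hxU
    exact (hdisj α hα).notMem_of_mem_left hxα hxF

/-- a map constant on each set of some resolvable partition is fragmented. -/
theorem stmt_3 {X E : Type*} [TopologicalSpace X] [MetricSpace E]
    (g : X → E) (hg : ConstOnResolvablePartition g) : fragIdx g = 0 := by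
  obtain ⟨κ, U, hopen, -, hU0, hUκ, hlim, hconst⟩ := hg
  refine fragIdx_eq_zero_of_epsFragOn_zero fun F _ hF => ?_
  obtain ⟨δ, hδκ, hdisj, hmeet⟩ :=
    exists_disjoint_and_succ_inter_nonempty hU0 hlim (by rwa [hUκ, univ_inter])
  refine ⟨U (δ + 1), hopen _, hmeet, (Metric.ediam_subsingleton ?_).le⟩
  rintro _ ⟨x, ⟨hx, hxF⟩, rfl⟩ _ ⟨y, ⟨hy, hyF⟩, rfl⟩
  exact hconst δ hδκ x ⟨hx, hdisj.notMem_of_mem_right hxF⟩ y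
    ⟨hy, hdisj.notMem_of_mem_right hyF⟩
end

section
/- Let X be a topological space and (E,ρ) a metric space. A mapping f: X → E is fragmented if and only if there exists a sequence (f_n) of mappings converging uniformly to f such that each f_n is constant on each set of some resolvable partition of X. -/
open Set Filter Ordinal ENNReal

universe u v

/-!
A fragmented map is approximated within `ε` by exhausting `X` transfinitely with open sets:
at each stage, fragmentability applied to the not yet covered remainder yields a new
open set on whose trace the oscillation is at most `ε`; the traces form a resolvable partition,
and a map constant on each trace is `ε`-close to `f`. Conversely, if `g` is constant on the
pieces of a resolvable partition and `δ`-close to `f`, then for any nonempty `F` the first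
stage `U (γ + 1)` meeting `F` meets it inside a single piece, where `f` oscillates by at most `2δ`.
-/

open Order

variable {X : Type u} {E : Type v}

section Transfinite

variable {κ : Ordinal.{u}} {U : Ordinal.{u} → Set X}

theorem exists_lt_inter_add_one_nonempty_disjoint (h0 : U 0 = ∅)
    (hlim : ∀ γ ≤ κ, IsSuccLimit γ → U γ = ⋃ α < γ, U α) {F : Set X}
    (hF : (U κ ∩ F).Nonempty) :
    ∃ γ < κ, (U (γ + 1) ∩ F).Nonempty ∧ Disjoint (U γ) F := by
  set S : Set Ordinal.{u} := {γ | (U γ ∩ F).Nonempty}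
  set γ := sInf S
  have hγ : (U γ ∩ F).Nonempty := csInf_mem (⟨κ, hF⟩ : S.Nonempty)
  have hγκ : γ ≤ κ := csInf_le' (s := S) hF
  have hbelow : ∀ α < γ, Disjoint (U α) F := fun α hα =>
    disjoint_iff_inter_eq_empty.2 (not_nonempty_iff_eq_empty.1 (notMem_of_lt_csInf' (s := S) hα))
  rcases Ordinal.zero_or_succ_or_isSuccLimit γ with hzero | ⟨δ, hδ⟩ | hγlim
  · simp [hzero, h0] at hγ
  · have hδγ : δ < γ := hδ ▸ lt_succ δ
    refine ⟨δ, hδγ.trans_le hγκ, ?_, hbelow δ hδγ⟩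
    rwa [← succ_eq_add_one, hδ]
  · rw [hlim γ hγκ hγlim] at hγ
    obtain ⟨x, hxU, hxF⟩ := hγ
    obtain ⟨α, hα, hxα⟩ := mem_iUnion₂.1 hxU
    exact absurd hxF ((hbelow α hα).notMem_of_mem_left hxα)

theorem eq_of_mem_add_one_diff (hmono : Monotone U) {x : X} {α β : Ordinal.{u}}
    (hα : x ∈ U (α + 1) \ U α) (hβ : x ∈ U (β + 1) \ U β) : α = β := by
  by_contra hne
  wlog hlt : α < β generalizing α β
  · exact this hβ hα (Ne.symm hne) ((not_lt.1 hlt).lt_of_ne (Ne.symm hne))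
  exact hβ.2 (hmono (add_one_le_of_lt hlt) hα.1)

theorem exists_const_on_pieces_edist_le [PseudoEMetricSpace E] {f : X → E} {ε : ℝ≥0∞}
    (hmono : Monotone U) (h0 : U 0 = ∅) (hκ : U κ = Set.univ)
    (hlim : ∀ γ ≤ κ, IsSuccLimit γ → U γ = ⋃ α < γ, U α)
    (hdiam : ∀ γ < κ, Metric.ediam (f '' (U (γ + 1) \ U γ)) ≤ ε) :
    ∃ g : X → E, (∀ γ < κ, ∀ x ∈ U (γ + 1) \ U γ, ∀ y ∈ U (γ + 1) \ U γ, g x = g y) ∧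
      ∀ x, edist (f x) (g x) ≤ ε := by
  have hpiece : ∀ x, ∃ γ < κ, x ∈ U (γ + 1) \ U γ := fun x => by
    obtain ⟨γ, hγκ, ⟨y, hy, rfl⟩, hdisj⟩ :=
      exists_lt_inter_add_one_nonempty_disjoint h0 hlim (F := {x}) (by simp [hκ])
    exact ⟨γ, hγκ, hy, disjoint_singleton_right.1 hdisj⟩
  choose d hdκ hd using hpiece
  classical
  let rep (γ : Ordinal.{u}) (x : X) : X :=
    if h : (U (γ + 1) \ U γ).Nonempty then h.choose else x
  have hrep : ∀ γ x (hx : x ∈ U (γ + 1) \ U γ),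
      rep γ x = (⟨x, hx⟩ : (U (γ + 1) \ U γ).Nonempty).choose := fun γ x hx => dif_pos ⟨x, hx⟩
  refine ⟨fun x => f (rep (d x) x), fun γ _ x hx y hy => ?_, fun x => ?_⟩
  · simp only [eq_of_mem_add_one_diff hmono (hd x) hx, eq_of_mem_add_one_diff hmono (hd y) hy,
      hrep γ x hx, hrep γ y hy]
  · show edist (f x) (f (rep (d x) x)) ≤ ε
    rw [hrep _ x (hd x)]
    exact (Metric.edist_le_ediam_of_mem (mem_image_of_mem f (hd x))
      (mem_image_of_mem f (Exists.choose_spec _))).trans (hdiam _ (hdκ x))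

noncomputable def iterUnion (step : Set X → Set X) (o : Ordinal.{u}) : Set X :=
  Ordinal.limitRecOn o ∅ (fun _ S => S ∪ step S) fun γ _ ih => ⋃ (β) (h : β < γ), ih β h

variable {step : Set X → Set X}

@[simp]
theorem iterUnion_zero : iterUnion step 0 = ∅ :=
  Ordinal.limitRecOn_zero _ _ _

theorem iterUnion_add_one (o : Ordinal.{u}) :
    iterUnion step (o + 1) = iterUnion step o ∪ step (iterUnion step o) :=
  Ordinal.limitRecOn_add_one _ _ _ _

theorem iterUnion_of_isSuccLimit {γ : Ordinal.{u}} (hγ : IsSuccLimit γ) :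
    iterUnion step γ = ⋃ α < γ, iterUnion step α :=
  Ordinal.limitRecOn_limit _ _ _ _ hγ

theorem monotone_iterUnion : Monotone (iterUnion step) := by
  intro α β hαβ
  induction β using Ordinal.limitRecOn with
  | zero => rw [nonpos_iff_eq_zero.1 hαβ]
  | add_one β ih =>
    rcases (Order.le_succ_iff_eq_or_le.1 hαβ) with rfl | hle
    · exact le_rfl
    · exact (ih hle).trans (iterUnion_add_one β ▸ subset_union_left)
  | limit γ hγ ih =>
    rcases hαβ.eq_or_lt with rfl | hlt
    · exact le_rfl
    · rw [iterUnion_of_isSuccLimit hγ]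
      exact subset_biUnion_of_mem (u := iterUnion step) hlt

theorem isOpen_iterUnion [TopologicalSpace X] (hstep : ∀ S, S ≠ Set.univ → IsOpen (step S))
    (o : Ordinal.{u}) :
    IsOpen (iterUnion step o) := by
  induction o using Ordinal.limitRecOn with
  | zero => simp
  | add_one o ih =>
    rw [iterUnion_add_one]
    by_cases ho : iterUnion step o = Set.univ
    · rw [ho, univ_union]
      exact isOpen_univ
    · exact ih.union (hstep _ ho)
  | limit γ hγ ih =>
    rw [iterUnion_of_isSuccLimit hγ]
    exact isOpen_biUnion ih

/-- The iteration reaches `Set.univ`: otherwise it would be a strictly increasing map from the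
ordinals of universe `u` into the small type `Set X`. -/
theorem exists_iterUnion_eq_univ (hstep : ∀ S, S ≠ Set.univ → ¬step S ⊆ S) :
    ∃ κ : Ordinal.{u}, iterUnion step κ = Set.univ := by
  by_contra! hne
  have hmono : StrictMono (iterUnion step) := fun α β hαβ =>
    calc iterUnion step α < iterUnion step (α + 1) := by
          rw [iterUnion_add_one]
          exact left_lt_sup.2 (hstep _ (hne α))
      _ ≤ iterUnion step β := monotone_iterUnion (add_one_le_of_lt hαβ)
  exact not_injective_of_ordinal _ hmono.injective

end Transfinite

section Fragmented

variable [TopologicalSpace X] [PseudoEMetricSpace E] {f g : X → E} {A : Set X} {ε δ : ℝ≥0∞}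

theorem EpsFragOn.mono_s4 (hf : EpsFragOn f A ε) (hε : ε ≤ δ) : EpsFragOn f A δ := fun F hFA hF =>
  let ⟨V, hV, hne, hdiam⟩ := hf F hFA hF
  ⟨V, hV, hne, hdiam.trans hε⟩

theorem fragIdx_eq_zero_iff : fragIdx f = 0 ↔ ∀ ε, 0 < ε → EpsFragOn f Set.univ ε := by
  refine ⟨fun h ε hε => ?_, fun h => nonpos_iff_eq_zero.1 ?_⟩
  · obtain ⟨δ, ⟨-, hδ⟩, hδε⟩ := sInf_lt_iff.1 (h ▸ hε : fragIdx f < ε)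
    exact hδ.mono_s4 hδε.le
  · exact le_of_forall_gt_imp_ge_of_dense fun ε hε => sInf_le ⟨hε, h ε hε⟩

theorem EpsFragOn.of_edist_le (hg : EpsFragOn g A ε) (hfg : ∀ x, edist (f x) (g x) ≤ δ) :
    EpsFragOn f A (δ + ε + δ) := by
  intro F hFA hF
  obtain ⟨V, hV, hne, hdiam⟩ := hg F hFA hF
  refine ⟨V, hV, hne, Metric.ediam_le ?_⟩
  rintro _ ⟨x, hx, rfl⟩ _ ⟨y, hy, rfl⟩
  calc edist (f x) (f y) ≤ edist (f x) (g x) + edist (g x) (g y) + edist (g y) (f y) :=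
        edist_triangle4 _ _ _ _
    _ ≤ δ + ε + δ := by
      gcongr
      · exact hfg x
      · exact (Metric.edist_le_ediam_of_mem (mem_image_of_mem g hx)
          (mem_image_of_mem g hy)).trans hdiam
      · exact edist_comm (f y) (g y) ▸ hfg y

theorem ConstOnResolvablePartition.epsFragOn_univ (hg : ConstOnResolvablePartition g) :
    EpsFragOn g Set.univ 0 := by
  obtain ⟨κ, U, hopen, -, h0, hκ, hlim, hconst⟩ := hg
  rintro F - hF
  obtain ⟨γ, hγκ, hmeet, hdisj⟩ :=
    exists_lt_inter_add_one_nonempty_disjoint h0 hlim (by rwa [hκ, univ_inter])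
  have hpiece : U (γ + 1) ∩ F ⊆ U (γ + 1) \ U γ := fun x hx =>
    ⟨hx.1, hdisj.notMem_of_mem_right hx.2⟩
  refine ⟨U (γ + 1), hopen _, hmeet, Metric.ediam_le ?_⟩
  rintro _ ⟨x, hx, rfl⟩ _ ⟨y, hy, rfl⟩
  rw [hconst γ hγκ x (hpiece hx) y (hpiece hy), edist_self]

theorem EpsFragOn.exists_constOnResolvablePartition_edist_le (hf : EpsFragOn f Set.univ ε) :
    ∃ g : X → E, ConstOnResolvablePartition g ∧ ∀ x, edist (f x) (g x) ≤ ε := by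
  choose! V hVopen hVmeet hVdiam using fun (S : Set X) (hS : S ≠ Set.univ) =>
    hf Sᶜ (subset_univ _) (nonempty_compl.2 hS)
  have hpiece : ∀ γ, iterUnion V (γ + 1) \ iterUnion V γ = V (iterUnion V γ) ∩ (iterUnion V γ)ᶜ :=
    fun γ => by rw [iterUnion_add_one, union_sdiff_left, sdiff_eq]
  obtain ⟨κ, hκ⟩ := exists_iterUnion_eq_univ fun S hS hsub =>
    let ⟨_, hxV, hxS⟩ := hVmeet S hS
    hxS (hsub hxV)
  obtain ⟨g, hconst, hfg⟩ := exists_const_on_pieces_edist_le (f := f) (ε := ε)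
    monotone_iterUnion iterUnion_zero hκ (fun γ _ hγ => iterUnion_of_isSuccLimit hγ)
    fun γ _ => by
      by_cases hγ : iterUnion V γ = Set.univ
      · simp [hγ]
      · exact hpiece γ ▸ hVdiam _ hγ
  exact ⟨g, ⟨κ, iterUnion V, isOpen_iterUnion hVopen, fun _ _ h => monotone_iterUnion h,
    iterUnion_zero, hκ, fun γ _ hγ => iterUnion_of_isSuccLimit hγ, hconst⟩, hfg⟩

end Fragmented

/-- `f` is fragmented iff it is the uniform limit of a sequence of maps each
constant on each set of some resolvable partition of `X`. -/
theorem stmt_4 {X E : Type*} [TopologicalSpace X] [MetricSpace E] (f : X → E) :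
    fragIdx f = 0 ↔ ∃ fn : ℕ → X → E, (∀ n, ConstOnResolvablePartition (fn n)) ∧
      TendstoUniformly fn f Filter.atTop := by
  rw [fragIdx_eq_zero_iff]
  constructor
  · intro hf
    choose g hg hfg using fun n : ℕ =>
      (hf _ (ENNReal.inv_pos.2 (natCast_ne_top n))).exists_constOnResolvablePartition_edist_le
    refine ⟨g, hg, EMetric.tendstoUniformly_iff.2 fun ε hε => ?_⟩
    obtain ⟨N, hN⟩ := ENNReal.exists_inv_nat_lt hε.ne'
    filter_upwards [eventually_ge_atTop N] with n hn x
    exact (hfg n x).trans_lt ((ENNReal.inv_le_inv.2 (by exact_mod_cast hn)).trans_lt hN)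
  · rintro ⟨g, hg, hlim⟩ ε hε
    obtain ⟨n, hn⟩ := (EMetric.tendstoUniformly_iff.1 hlim (ε / 2) (ENNReal.half_pos hε.ne')).exists
    simpa [ENNReal.add_halves] using (hg n).epsFragOn_univ.of_edist_le fun x => (hn x).le
end

section
/- Let X be a topological space and (E,ρ) a separable metric space. Then every mapping f: X → E of the first resolvable class is σ-fragmented by resolvable sets, i.e., σ-frag(f) = 0. -/
open Set Filter Ordinal ENNReal

universe u v

/-!
Fix `ε > 0` and cover `E` by countably many open sets of diameter at most `ε` (balls of radius
`ε / 2` around a dense sequence). The preimage of each of them is a countable union of resolvable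
sets, and `f` is trivially `ε`-fragmented on any set whose image has diameter at most `ε`: the
whole space serves as the open piece. Re-indexing the double sequence by `ℕ` gives a countable
resolvable cover of `X` witnessing `sfragIdx f ≤ ε`.
-/

section ResolvableClass

variable {X E : Type*} [TopologicalSpace X]

/-- The paper's `Σ₂(H(X))`. -/
def IsSigmaResolvable (S : Set X) : Prop :=
  ∃ H : ℕ → Set X, (∀ n, Resolvable (H n)) ∧ S = ⋃ n, H n

def FirstResolvableClass [TopologicalSpace E] (f : X → E) : Prop :=
  ∀ U : Set E, IsOpen U → IsSigmaResolvable (f ⁻¹' U)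

theorem exists_resolvable_refinement_of_isSigmaResolvable {S : ℕ → Set X}
    (hS : ∀ i, IsSigmaResolvable (S i)) :
    ∃ H : ℕ → Set X, (∀ n, Resolvable (H n)) ∧ (⋃ n, H n) = ⋃ i, S i ∧
      ∀ n, ∃ i, H n ⊆ S i := by
  choose G hG_res hS_eq using hS
  refine ⟨fun n => G n.unpair.1 n.unpair.2, fun n => hG_res _ _, ?_, fun n => ⟨n.unpair.1, ?_⟩⟩
  · simp only [Set.iUnion_unpair, hS_eq]
  · rw [hS_eq]
    exact subset_iUnion _ _

section PseudoEMetricSpace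

variable [PseudoEMetricSpace E]

theorem exists_isOpen_cover_ediam_le [TopologicalSpace.SeparableSpace E] {ε : ℝ≥0∞}
    (hε : 0 < ε) :
    ∃ U : ℕ → Set E, (∀ n, IsOpen (U n)) ∧ (⋃ n, U n) = Set.univ ∧
      ∀ n, Metric.ediam (U n) ≤ ε := by
  rcases isEmpty_or_nonempty E with _ | _
  · exact ⟨fun _ => ∅, fun _ => isOpen_empty, eq_univ_of_forall isEmptyElim, fun _ => by simp⟩
  refine ⟨fun n => Metric.eball (TopologicalSpace.denseSeq E n) (ε / 2),
    fun _ => Metric.isOpen_eball, eq_univ_of_forall fun y => ?_, fun _ => ?_⟩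
  · have hy : y ∈ closure (range (TopologicalSpace.denseSeq E)) :=
      TopologicalSpace.denseRange_denseSeq E y
    obtain ⟨_, ⟨n, rfl⟩, hyn⟩ :=
      EMetric.mem_closure_iff.1 hy (ε / 2) (ENNReal.half_pos hε.ne')
    exact mem_iUnion.2 ⟨n, Metric.mem_eball.2 hyn⟩
  · calc Metric.ediam (Metric.eball _ (ε / 2)) ≤ 2 * (ε / 2) := Metric.ediam_eball_le
      _ = ε := ENNReal.mul_div_cancel' (by norm_num) (by norm_num)

theorem epsFragOn_of_ediam_image_le {f : X → E} {A : Set X} {ε : ℝ≥0∞}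
    (h : Metric.ediam (f '' A) ≤ ε) : EpsFragOn f A ε := by
  intro F hFA hF
  refine ⟨Set.univ, isOpen_univ, by rwa [univ_inter], ?_⟩
  rw [univ_inter]
  exact (Metric.ediam_mono (image_mono hFA)).trans h

theorem sfragIdx_eq_zero_of_forall_pos {f : X → E}
    (h : ∀ ε : ℝ≥0∞, 0 < ε → ∃ H : ℕ → Set X, (∀ n, Resolvable (H n)) ∧
      (⋃ n, H n) = Set.univ ∧ ∀ n, EpsFragOn f (H n) ε) :
    sfragIdx f = 0 := by
  refine le_antisymm (ENNReal.le_of_forall_pos_le_add fun ε hε _ => ?_) zero_le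
  rw [zero_add]
  exact sInf_le ⟨by exact_mod_cast hε, h ε (by exact_mod_cast hε)⟩

theorem FirstResolvableClass.sfragIdx_eq_zero [TopologicalSpace.SeparableSpace E] {f : X → E}
    (hf : FirstResolvableClass f) : sfragIdx f = 0 := by
  refine sfragIdx_eq_zero_of_forall_pos fun ε hε => ?_
  obtain ⟨U, hU_open, hU_cover, hU_diam⟩ := exists_isOpen_cover_ediam_le (E := E) hε
  obtain ⟨H, hH_res, hH_cover, hH_sub⟩ :=
    exists_resolvable_refinement_of_isSigmaResolvable fun i => hf (U i) (hU_open i)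
  refine ⟨H, hH_res, by rw [hH_cover, ← preimage_iUnion, hU_cover, preimage_univ], fun n => ?_⟩
  obtain ⟨i, hi⟩ := hH_sub n
  exact epsFragOn_of_ediam_image_le <|
    (Metric.ediam_mono (image_subset_iff.2 hi)).trans (hU_diam i)

end PseudoEMetricSpace

end ResolvableClass

/-- if `E` is separable metric, every map of the first resolvable class is
σ-fragmented by resolvable sets. -/
theorem stmt_5 {X E : Type*} [TopologicalSpace X] [MetricSpace E]
    [TopologicalSpace.SeparableSpace E] (f : X → E)
    (hf : ∀ U : Set E, IsOpen U → ∃ H : ℕ → Set X, (∀ n, Resolvable (H n)) ∧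
      f ⁻¹' U = ⋃ n, H n) :
    sfragIdx f = 0 :=
  FirstResolvableClass.sfragIdx_eq_zero hf
end

section
/- Let X be a topological space, (E,ρ) a metric space, and define d(f,g) = sup_x ρ(f(x),g(x)) and d(f,F) = inf{d(f,g) : g ∈ F}. Then for every mapping f: X → E: (1/2)·σ-frag(f) ≤ d(f, σFrag(X,E)) ≤ σ-frag(f), where σFrag(X,E) is the set of all σ-fragmented mappings X → E. -/
open Set Filter Ordinal ENNReal

universe u v

/-! A σ-fragmented `g` which is `d`-close to `f` makes `f` ε-fragmented on the same resolvable
cover for every `ε > 2d`, by the triangle inequality. Conversely, if `f` is `ε`-fragmented on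
the pieces of a countable resolvable cover, which may be made disjoint, then the transfinite
exhaustion of each piece by relatively open sets of `f`-oscillation at most `ε` partitions it
into layers; replacing `f` on each layer by one of its values gives a σ-fragmented map which is
`ε`-close to `f`. -/

open Metric Function

section Resolvable

variable {X : Type u} [TopologicalSpace X] {H K : Set X}

theorem Resolvable.compl (h : Resolvable H) : Resolvable Hᶜ := by
  intro A hA
  obtain ⟨U, hU, hUA, hsub⟩ := h A hA
  exact ⟨U, hU, hUA, by rwa [compl_compl, or_comm]⟩

theorem Resolvable.inter (hH : Resolvable H) (hK : Resolvable K) : Resolvable (H ∩ K) := by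
  intro A hA
  obtain ⟨U, hU, hUA, hH | hH⟩ := hH A hA
  · obtain ⟨U', hU', hU'A, hK | hK⟩ := hK (U ∩ A) hUA
    · exact ⟨U' ∩ U, hU'.inter hU, by rwa [inter_assoc], Or.inl fun z hz ↦
        ⟨hH (inter_assoc U' U A ▸ hz).2, hK (inter_assoc U' U A ▸ hz)⟩⟩
    · exact ⟨U' ∩ U, hU'.inter hU, by rwa [inter_assoc], Or.inr fun z hz hzHK ↦
        hK (inter_assoc U' U A ▸ hz) hzHK.2⟩
  · exact ⟨U, hU, hUA, Or.inr fun z hz hzHK ↦ hH hz hzHK.1⟩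

theorem Resolvable.diff (hH : Resolvable H) (hK : Resolvable K) : Resolvable (H \ K) :=
  hH.inter hK.compl

theorem Resolvable.disjointed {H : ℕ → Set X} (h : ∀ n, Resolvable (H n)) (n : ℕ) :
    Resolvable (disjointed H n) :=
  disjointedRec (fun _ i ht ↦ ht.diff (h i)) (h n)

end Resolvable

section Exhaustion

variable {X : Type u} (c : Set X → Set X)

noncomputable def exhaust (o : Ordinal.{u}) : Set X :=
  ⋃ β : Iio o, c (exhaust β.1)
termination_by o
decreasing_by exact β.2

theorem mem_exhaust {o : Ordinal.{u}} {x : X} :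
    x ∈ exhaust c o ↔ ∃ β < o, x ∈ c (exhaust c β) := by
  rw [exhaust]
  simp

theorem exists_subset_exhaust {A : Set X}
    (hc : ∀ U, (A \ U).Nonempty → (c U ∩ (A \ U)).Nonempty) : ∃ o, A ⊆ exhaust c o := by
  by_contra! hA
  choose x hx using fun o ↦ hc (exhaust c o) (sdiff_nonempty.mpr (hA o))
  have hlt : ∀ {β o}, β < o → x β ≠ x o := fun {β o} hβo h ↦
    (hx o).2.2 (h ▸ (mem_exhaust c).mpr ⟨_, hβo, (hx β).1⟩)
  refine Cardinal.not_injective_limitation_set x (Injective.injOn fun β o h ↦ ?_)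
  by_contra hne
  rcases lt_or_gt_of_ne hne with hβo | hoβ
  exacts [hlt hβo h, hlt hoβ h.symm]

/-- The first stage at which `x` is added (`0` if it never is). -/
noncomputable def exhaustRank (x : X) : Ordinal.{u} :=
  sInf {o | x ∈ c (exhaust c o)}

variable {c}

theorem exhaustRank_le {x : X} {o : Ordinal.{u}} (h : x ∈ c (exhaust c o)) :
    exhaustRank c x ≤ o :=
  csInf_le' h

theorem mem_exhaustRank {x : X} {o : Ordinal.{u}} (h : x ∈ exhaust c o) :
    x ∈ c (exhaust c (exhaustRank c x)) := by
  obtain ⟨β, -, hβ⟩ := (mem_exhaust c).mp h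
  exact csInf_mem (s := {o | x ∈ c (exhaust c o)}) ⟨β, hβ⟩

theorem notMem_exhaust_exhaustRank (x : X) : x ∉ exhaust c (exhaustRank c x) := fun h ↦ by
  obtain ⟨β, hβ, hx⟩ := (mem_exhaust c).mp h
  exact (exhaustRank_le hx).not_gt hβ

end Exhaustion

theorem edist_le_unifDist {X : Type u} {E : Type v} [PseudoEMetricSpace E] (f g : X → E) (x : X) :
    edist (f x) (g x) ≤ unifDist f g :=
  le_iSup (fun x ↦ edist (f x) (g x)) x

section Fragmentation

variable {X : Type u} {E : Type v} {ι κ : Type*} [TopologicalSpace X]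

/-- `EpsFragOn` with `ε = 0` for the discrete metric on `ι`. -/
def DiscreteFragOn (φ : X → ι) (A : Set X) : Prop :=
  ∀ F ⊆ A, F.Nonempty → ∃ V, IsOpen V ∧ (V ∩ F).Nonempty ∧ (φ '' (V ∩ F)).Subsingleton

theorem DiscreteFragOn.of_factor {φ : X → ι} {ψ : X → κ} {A : Set X} (h : DiscreteFragOn φ A)
    (hψ : ∀ x ∈ A, ∀ y ∈ A, φ x = φ y → ψ x = ψ y) : DiscreteFragOn ψ A := by
  intro F hFA hF
  obtain ⟨V, hV, hVF, hφ⟩ := h F hFA hF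
  refine ⟨V, hV, hVF, ?_⟩
  rintro _ ⟨x, hx, rfl⟩ _ ⟨y, hy, rfl⟩
  exact hψ x (hFA hx.2) y (hFA hy.2) (hφ (mem_image_of_mem φ hx) (mem_image_of_mem φ hy))

theorem discreteFragOn_exhaustRank {c : Set X → Set X} (hc : ∀ U, IsOpen (c U)) {A : Set X}
    {o : Ordinal.{u}} (hA : A ⊆ exhaust c o) : DiscreteFragOn (exhaustRank c) A := by
  intro F hFA hF
  obtain ⟨x, hxF, hx⟩ := csInf_mem (hF.image (exhaustRank c))
  have hrank : ∀ y ∈ c (exhaust c (exhaustRank c x)) ∩ F, exhaustRank c y = exhaustRank c x :=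
    fun y hy ↦ (exhaustRank_le hy.1).antisymm (hx ▸ csInf_le' (mem_image_of_mem _ hy.2))
  refine ⟨c (exhaust c (exhaustRank c x)), hc _, ⟨x, mem_exhaustRank (hA (hFA hxF)), hxF⟩, ?_⟩
  rintro _ ⟨y, hy, rfl⟩ _ ⟨z, hz, rfl⟩
  rw [hrank y hy, hrank z hz]

variable [PseudoEMetricSpace E] {f g : X → E} {A B : Set X} {ε δ : ℝ≥0∞}

theorem EpsFragOn.mono_s6 (h : EpsFragOn f B ε) (hAB : A ⊆ B) : EpsFragOn f A ε :=
  fun F hFA ↦ h F (hFA.trans hAB)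

theorem DiscreteFragOn.epsFragOn (h : DiscreteFragOn f A) (ε : ℝ≥0∞) : EpsFragOn f A ε := by
  intro F hFA hF
  obtain ⟨V, hV, hVF, hf⟩ := h F hFA hF
  exact ⟨V, hV, hVF, hf.ediam_eq.trans_le zero_le⟩

theorem EpsFragOn.exists_discreteFragOn (h : EpsFragOn f A ε) :
    ∃ φ : X → Ordinal.{u}, DiscreteFragOn φ A ∧
      ∀ x ∈ A, ∀ y ∈ A, φ x = φ y → edist (f x) (f y) ≤ ε := by
  have hstep : ∀ U : Set X, ∃ V, IsOpen V ∧ ((A \ U).Nonempty →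
      (V ∩ (A \ U)).Nonempty ∧ ediam (f '' (V ∩ (A \ U))) ≤ ε) := fun U ↦ by
    by_cases hU : (A \ U).Nonempty
    · obtain ⟨V, hV, hVU, hdiam⟩ := h (A \ U) sdiff_subset hU
      exact ⟨V, hV, fun _ ↦ ⟨hVU, hdiam⟩⟩
    · exact ⟨∅, isOpen_empty, fun h' ↦ absurd h' hU⟩
  choose c hopen hc using hstep
  obtain ⟨o, hA⟩ := exists_subset_exhaust c fun U hU ↦ (hc U hU).1
  have hlayer : ∀ x ∈ A, x ∈ c (exhaust c (exhaustRank c x)) ∩ (A \ exhaust c (exhaustRank c x)) :=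
    fun x hx ↦ ⟨mem_exhaustRank (hA hx), hx, notMem_exhaust_exhaustRank x⟩
  refine ⟨exhaustRank c, discreteFragOn_exhaustRank hopen hA, fun x hx y hy hxy ↦ ?_⟩
  refine edist_le_of_ediam_le (mem_image_of_mem f (hlayer x hx)) ?_ (hc _ ⟨x, (hlayer x hx).2⟩).2
  exact mem_image_of_mem f (hxy ▸ hlayer y hy)

theorem exists_discreteFragOn_of_epsFragOn {A : ℕ → Set X} (hdisj : Pairwise (Disjoint on A))
    (hcov : ⋃ n, A n = Set.univ) (hf : ∀ n, EpsFragOn f (A n) ε) :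
    ∃ φ : X → ℕ × Ordinal.{u}, (∀ n, DiscreteFragOn φ (A n)) ∧
      ∀ x y, φ x = φ y → edist (f x) (f y) ≤ ε := by
  choose rank hrank hfib using fun n ↦ (hf n).exists_discreteFragOn
  choose idx hidx using fun x ↦ mem_iUnion.mp (hcov.symm ▸ mem_univ x : x ∈ ⋃ n, A n)
  have hidx_eq : ∀ {x n}, x ∈ A n → idx x = n := fun {x n} hx ↦ by
    by_contra hne
    exact disjoint_left.mp (hdisj hne) (hidx x) hx
  refine ⟨fun x ↦ (idx x, rank (idx x) x), fun n ↦ (hrank n).of_factor ?_, ?_⟩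
  · intro x hx y hy hxy
    simp only [hidx_eq hx, hidx_eq hy, hxy]
  · intro x y hxy
    obtain ⟨hn, hr⟩ := Prod.mk.inj hxy
    exact hfib _ x (hidx x) y (hn ▸ hidx y) (by rw [hr, hn])

theorem EpsFragOn.of_unifDist (hg : EpsFragOn g A δ) :
    EpsFragOn f A (δ + 2 * unifDist f g) := by
  intro F hFA hF
  obtain ⟨V, hV, hVF, hdiam⟩ := hg F hFA hF
  refine ⟨V, hV, hVF, ediam_image_le_iff.mpr fun y hy z hz ↦ ?_⟩
  calc edist (f y) (f z) ≤ edist (f y) (g y) + edist (g y) (g z) + edist (g z) (f z) :=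
        edist_triangle4 _ _ _ _
    _ ≤ unifDist f g + δ + unifDist f g := by
        gcongr
        · exact edist_le_unifDist f g y
        · exact edist_le_of_ediam_le (mem_image_of_mem g hy) (mem_image_of_mem g hz) hdiam
        · exact edist_comm (g z) (f z) ▸ edist_le_unifDist f g z
    _ = δ + 2 * unifDist f g := by ring

end Fragmentation

section SigmaFragmentation

variable {X : Type u} {E : Type v} [TopologicalSpace X] [PseudoEMetricSpace E] {f g : X → E}
  {H : ℕ → Set X} {ε : ℝ≥0∞}

theorem sfragIdx_le (hε : 0 < ε) (hres : ∀ n, Resolvable (H n)) (hcov : ⋃ n, H n = Set.univ)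
    (hf : ∀ n, EpsFragOn f (H n) ε) : sfragIdx f ≤ ε :=
  sInf_le ⟨hε, H, hres, hcov, hf⟩

theorem sfragIdx_eq_zero_of_discreteFragOn (hres : ∀ n, Resolvable (H n))
    (hcov : ⋃ n, H n = Set.univ) (hg : ∀ n, DiscreteFragOn g (H n)) : sfragIdx g = 0 :=
  nonpos_iff_eq_zero.mp <| le_of_forall_gt_imp_ge_of_dense fun _ hδ ↦
    sfragIdx_le hδ hres hcov fun n ↦ (hg n).epsFragOn _

theorem sfragIdx_le_add_two_mul_unifDist (f g : X → E) :
    sfragIdx f ≤ sfragIdx g + 2 * unifDist f g := by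
  rw [sfragIdx.eq_1 g, ENNReal.sInf_add]
  refine le_iInf₂ fun δ ⟨hδ, H, hres, hcov, hg⟩ ↦ ?_
  exact sfragIdx_le (hδ.trans_le le_self_add) hres hcov fun n ↦ (hg n).of_unifDist

theorem sfragIdx_div_two_le_distToSFrag (f : X → E) : sfragIdx f / 2 ≤ distToSFrag f := by
  refine le_iInf fun ⟨g, hg⟩ ↦ ENNReal.div_le_of_le_mul' ?_
  simpa [hg] using sfragIdx_le_add_two_mul_unifDist f g

theorem distToSFrag_le_sfragIdx (f : X → E) : distToSFrag f ≤ sfragIdx f := by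
  refine le_sInf fun ε ⟨_, H, hres, hcov, hf⟩ ↦ ?_
  have hcov' : ⋃ n, disjointed H n = Set.univ := iUnion_disjointed.trans hcov
  obtain ⟨φ, hφ, hfib⟩ := exists_discreteFragOn_of_epsFragOn (disjoint_disjointed H) hcov'
    fun n ↦ (hf n).mono_s6 (disjointed_subset H n)
  -- `g` replaces `f x` by the value of `f` at a chosen point of the fibre of `φ` through `x`.
  set g := f ∘ rangeSplitting φ ∘ rangeFactorization φ
  have hg : sfragIdx g = 0 :=
    sfragIdx_eq_zero_of_discreteFragOn (Resolvable.disjointed hres) hcov' fun n ↦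
      (hφ n).of_factor fun x _ y _ hxy ↦ by simp only [g, comp_apply, rangeFactorization, hxy]
  refine (iInf_le _ ⟨g, hg⟩).trans (iSup_le fun x ↦ hfib _ _ ?_)
  exact (apply_rangeSplitting φ (rangeFactorization φ x)).symm

end SigmaFragmentation

/-- `(1/2)·σ-frag(f) ≤ d(f, σFrag(X,E)) ≤ σ-frag(f)`. -/
theorem stmt_6 {X E : Type*} [TopologicalSpace X] [MetricSpace E] (f : X → E) :
    sfragIdx f / 2 ≤ distToSFrag f ∧ distToSFrag f ≤ sfragIdx f :=
  ⟨sfragIdx_div_two_le_distToSFrag f, distToSFrag_le_sfragIdx f⟩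
end

section
/- Let X be a topological space, (E,ρ) a metric space, and ε > 0. Then for every mapping f: X → E, the oscillation rank β(f,ε) defined by the canonical transfinite derivation of open sets coincides with β*(f,ε), the least length κ of a transfinite sequence of open sets with property *(f,ε). -/
open Set Filter Ordinal ENNReal

universe u v

/-!
The canonical derivation is the fastest sequence with property `*(f, ε)`: by transfinite
induction every such sequence satisfies `V α ⊆ oscSet f ε α` for `α ≤ κ`, and the canonical
derivation itself has property `*(f, ε)` up to any stage at which it exhausts `X`. So the two
sets of admissible lengths coincide, and so do their infima.
-/

section OscSet

variable {X : Type u} {E : Type v} [TopologicalSpace X] [PseudoEMetricSpace E]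
  (f : X → E) (ε : ℝ≥0∞)

@[simp]
lemma oscSet_zero : oscSet f ε 0 = ∅ :=
  Ordinal.limitRecOn_zero ..

lemma oscSet_limit {o : Ordinal.{u}} (ho : Order.IsSuccLimit o) :
    oscSet f ε o = ⋃ β < o, oscSet f ε β :=
  Ordinal.limitRecOn_limit _ _ _ _ ho

lemma oscSet_succ (o : Ordinal.{u}) : oscSet f ε (o + 1) =
    oscSet f ε o ∪ {x | x ∉ oscSet f ε o ∧ ∃ V : Set X, IsOpen V ∧ x ∈ V ∧
      Metric.ediam (f '' (V \ oscSet f ε o)) < ε} :=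
  Ordinal.limitRecOn_add_one ..

lemma mem_oscSet_succ {o : Ordinal.{u}} {x : X} : x ∈ oscSet f ε (o + 1) ↔
    x ∈ oscSet f ε o ∨ ∃ V : Set X, IsOpen V ∧ x ∈ V ∧
      Metric.ediam (f '' (V \ oscSet f ε o)) < ε := by
  rw [oscSet_succ, mem_union, mem_ofPred_eq]
  tauto

lemma oscSet_subset_succ (o : Ordinal.{u}) : oscSet f ε o ⊆ oscSet f ε (o + 1) :=
  fun _ hx => (mem_oscSet_succ f ε).2 (Or.inl hx)

lemma oscSet_mono : Monotone (oscSet f ε) := by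
  intro a b hab
  induction b using Ordinal.limitRecOn with
  | zero => rw [nonpos_iff_eq_zero.1 hab]
  | add_one b ih =>
    rcases hab.lt_or_eq with hlt | rfl
    · exact (ih (Order.lt_add_one_iff.1 hlt)).trans (oscSet_subset_succ f ε b)
    · rfl
  | limit b hb _ =>
    rcases hab.lt_or_eq with hlt | rfl
    · rw [oscSet_limit f ε hb]
      exact subset_biUnion_of_mem (u := oscSet f ε) hlt
    · rfl

lemma isOpen_oscSet (o : Ordinal.{u}) : IsOpen (oscSet f ε o) := by
  induction o using Ordinal.limitRecOn with
  | zero => simp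
  | add_one o ih =>
    rw [isOpen_iff_forall_mem_open]
    intro x hx
    rcases (mem_oscSet_succ f ε).1 hx with hxo | ⟨V, hV, hxV, hdiam⟩
    · exact ⟨oscSet f ε o, oscSet_subset_succ f ε o, ih, hxo⟩
    · exact ⟨V, fun y hy => (mem_oscSet_succ f ε).2 (Or.inr ⟨V, hV, hy, hdiam⟩), hV, hxV⟩
  | limit o ho ih =>
    rw [oscSet_limit f ε ho]
    exact isOpen_biUnion ih

lemma StarProp.subset_oscSet {κ : Ordinal.{u}} {V : Ordinal.{u} → Set X}
    (hV : StarProp f ε κ V) {α : Ordinal.{u}} (hα : α ≤ κ) : V α ⊆ oscSet f ε α := by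
  obtain ⟨-, -, hV0, -, hVlim, hVsucc⟩ := hV
  induction α using Ordinal.limitRecOn with
  | zero => simp [hV0]
  | add_one α ih =>
    have hακ : α < κ := (Order.lt_add_one_iff.2 le_rfl).trans_le hα
    intro x hx
    by_cases hxα : x ∈ V α
    · exact oscSet_subset_succ f ε α (ih hακ.le hxα)
    obtain ⟨W, hW, hxW, hdiam⟩ := hVsucc α hακ x ⟨hx, hxα⟩
    refine (mem_oscSet_succ f ε).2 (Or.inr ⟨W, hW, hxW, lt_of_le_of_lt ?_ hdiam⟩)
    exact Metric.ediam_mono (image_mono (sdiff_subset_sdiff_right (ih hακ.le)))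
  | limit α hα' ih =>
    rw [hVlim α hα hα', oscSet_limit f ε hα']
    exact iUnion₂_mono fun β hβ => ih β hβ (hβ.le.trans hα)

lemma starProp_oscSet {κ : Ordinal.{u}} (hκ : oscSet f ε κ = Set.univ) :
    StarProp f ε κ (oscSet f ε) := by
  refine ⟨fun α _ => isOpen_oscSet f ε α, fun α β hαβ _ => oscSet_mono f ε hαβ,
    oscSet_zero f ε, hκ, fun γ _ hγ => oscSet_limit f ε hγ, ?_⟩
  intro α _ x ⟨hx, hxα⟩
  exact ((mem_oscSet_succ f ε).1 hx).resolve_left hxα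

lemma exists_starProp_iff {κ : Ordinal.{u}} :
    (∃ V, StarProp f ε κ V) ↔ oscSet f ε κ = Set.univ :=
  ⟨fun ⟨_, hV⟩ => univ_subset_iff.1 (hV.2.2.2.1 ▸ hV.subset_oscSet f ε le_rfl),
    fun hκ => ⟨oscSet f ε, starProp_oscSet f ε hκ⟩⟩

end OscSet

theorem stmt_9_general {X E : Type*} [TopologicalSpace X] [MetricSpace E]
    (f : X → E) (ε : ℝ≥0∞) :
    sInf {α : Ordinal | oscSet f ε α = Set.univ} =
      sInf {κ : Ordinal | ∃ V : Ordinal → Set X, StarProp f ε κ V} ∧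
    ({α : Ordinal | oscSet f ε α = Set.univ}.Nonempty ↔
      {κ : Ordinal | ∃ V : Ordinal → Set X, StarProp f ε κ V}.Nonempty) := by
  simp [exists_starProp_iff]

/-- the oscillation rank `β(f,ε)` defined by the canonical transfinite
derivation coincides with `β*(f,ε)`, the least length of a sequence with property `*(f,ε)`
(including the case `∞`, expressed by the equivalence of nonemptiness). -/
theorem stmt_9 {X E : Type*} [TopologicalSpace X] [MetricSpace E]
    (f : X → E) (ε : ℝ≥0∞) (hε : 0 < ε) :
    sInf {α : Ordinal | oscSet f ε α = Set.univ} =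
      sInf {κ : Ordinal | ∃ V : Ordinal → Set X, StarProp f ε κ V} ∧
    ({α : Ordinal | oscSet f ε α = Set.univ}.Nonempty ↔
      {κ : Ordinal | ∃ V : Ordinal → Set X, StarProp f ε κ V}.Nonempty) :=
  stmt_9_general f ε
end
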